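/- arXiv:2504.19826 — 2 statements merged into one kernel-verified Lean document; each statement's English description precedes it below -/
import Mathlib

section
/- Let G be a finite group, S a Sylow p-subgroup of G, and x, y ∈ S. Then x and y are conjugate in G if and only if the images of x and y in G/O_{p'}(G) are conjugate in G/O_{p'}(G). -/
/-!
A homomorphism `f` whose kernel has order prime to `p` is injective on every `p`-subgroup.
Given `p`-elements `y, z` with `f z = f y`, work in `H = f⁻¹(C(f y))`, which contains both:
by Sylow's theorem in `H` some `h ∈ H` conjugates `z` into a Sylow subgroup of `H` containing `y`.
Since `f h` commutes with `f y`, the conjugate `h z h⁻¹` still has image `f y`, so it equals `y`.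
-/

open Subgroup

section

variable {G Q : Type*} [Group G] [Group Q] {p : ℕ}

theorem IsPGroup.injOn_of_coprime_card_ker {P : Subgroup G} (hP : IsPGroup p P) {f : G →* Q}
    (hker : (Nat.card f.ker).Coprime p) : Set.InjOn f P := by
  intro a ha b hb hab
  have hdisj : Disjoint P f.ker := hP.disjoint_of_coprime IsPGroup.card hker.symm
  refine mul_inv_eq_one.mp (disjoint_def.mp hdisj (mul_mem ha (inv_mem hb)) ?_)
  rw [MonoidHom.mem_ker, map_mul, map_inv, hab, mul_inv_cancel]

variable [Finite G] [Fact p.Prime] {f : G →* Q} {P R : Subgroup G} {x y z : G}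

theorem isConj_of_map_eq_of_commute (hker : (Nat.card f.ker).Coprime p)
    (hP : IsPGroup p P) (hR : IsPGroup p R) (hy : y ∈ P) (hz : z ∈ R) (hyz : f z = f y)
    (hcomm : ∀ g, Commute (f g) (f y)) : IsConj z y := by
  obtain ⟨P', hPP'⟩ := hP.exists_le_sylow
  obtain ⟨R', hRR'⟩ := hR.exists_le_sylow
  obtain ⟨g, hg⟩ := MulAction.exists_smul_eq G R' P'
  have hgz : g * z * g⁻¹ ∈ P' := by
    rw [← hg]
    exact smul_mem_pointwise_smul z (MulAut.conj g) (R' : Subgroup G) (hRR' hz)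
  have hfgz : f (g * z * g⁻¹) = f y := by
    rw [map_mul, map_mul, map_inv, hyz, (hcomm g).eq, mul_inv_cancel_right]
  exact isConj_iff.mpr ⟨g, P'.2.injOn_of_coprime_card_ker hker hgz (hPP' hy) hfgz⟩

theorem isConj_of_map_eq_of_coprime_card_ker (hker : (Nat.card f.ker).Coprime p)
    (hP : IsPGroup p P) (hR : IsPGroup p R) (hy : y ∈ P) (hz : z ∈ R) (hyz : f z = f y) :
    IsConj z y := by
  set H := (centralizer {f y}).comap f
  have hyH : y ∈ H := mem_comap.mpr (mem_centralizer_singleton_iff.mpr rfl)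
  have hzH : z ∈ H := mem_comap.mpr (mem_centralizer_singleton_iff.mpr (by rw [hyz]))
  have hkerH : (Nat.card (f.comp H.subtype).ker).Coprime p := by
    rw [← MonoidHom.comap_ker]
    exact hker.coprime_dvd_left (card_comap_dvd_of_injective _ _ H.subtype_injective)
  have hconj : IsConj (⟨z, hzH⟩ : H) ⟨y, hyH⟩ :=
    isConj_of_map_eq_of_commute hkerH hP.comap_subtype hR.comap_subtype
      (mem_comap.mpr hy) (mem_comap.mpr hz) hyz
      fun g => mem_centralizer_singleton_iff.mp (mem_comap.mp g.2)
  exact H.subtype.map_isConj hconj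

theorem isConj_map_iff_of_coprime_card_ker (hf : Function.Surjective f)
    (hker : (Nat.card f.ker).Coprime p) (hP : IsPGroup p P) (hR : IsPGroup p R) (hx : x ∈ P)
    (hy : y ∈ R) : IsConj (f x) (f y) ↔ IsConj x y := by
  refine ⟨fun hxy => ?_, f.map_isConj⟩
  obtain ⟨c, hc⟩ := isConj_iff.mp hxy
  obtain ⟨g, rfl⟩ := hf c
  have hgx : g * x * g⁻¹ ∈ P.map (MulAut.conj g).toMonoidHom := mem_map_of_mem _ hx
  refine (isConj_iff.mpr ⟨g, rfl⟩).trans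
    (isConj_of_map_eq_of_coprime_card_ker hker hR (hP.map _) hy hgx ?_)
  simpa only [map_mul, map_inv] using hc

end

theorem stmt11_general {G : Type*} [Group G] [Finite G] (p : ℕ) [Fact p.Prime]
    (S : Sylow p G)
    -- `N = O_{p'}(G)`: the largest normal subgroup of order coprime to `p`
    (N : Subgroup G) [N.Normal] (hNp : (Nat.card N).Coprime p)
    (x y : G) (hx : x ∈ S) (hy : y ∈ S) :
    IsConj x y ↔ IsConj (QuotientGroup.mk' N x) (QuotientGroup.mk' N y) := by
  refine (isConj_map_iff_of_coprime_card_ker (QuotientGroup.mk'_surjective N) ?_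
    S.2 S.2 hx hy).symm
  rwa [QuotientGroup.ker_mk']

theorem stmt11 {G : Type*} [Group G] [Finite G] (p : ℕ) [Fact p.Prime]
    (S : Sylow p G)
    -- `N = O_{p'}(G)`: the largest normal subgroup of order coprime to `p`
    (N : Subgroup G) [N.Normal] (hNp : (Nat.card N).Coprime p)
    (hNmax : ∀ M : Subgroup G, M.Normal → (Nat.card M).Coprime p → M ≤ N)
    (x y : G) (hx : x ∈ S) (hy : y ∈ S) :
    IsConj x y ↔ IsConj (QuotientGroup.mk' N x) (QuotientGroup.mk' N y) :=
  stmt11_general p S N hNp x y hx hy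
end

section
/- Let G be a finite group with a subnormal series H = H₀ ⊴ H₁ ⊴ ⋯ ⊴ Hₙ = G such that a fixed Sylow p-subgroup S of G is contained in H. Then O^{p'}(Hᵢ) = O^{p'}(H) for all i; in particular O^{p'}(G) = O^{p'}(H). -/
set_option linter.unusedSectionVars false

/-- `O^{p'}(K)` for a subgroup `K ≤ G`, as a subgroup of `G`: the smallest
subgroup of `K` that is normal in `K` and of index in `K` not divisible by `p`. -/
def relResidual (p : ℕ) {G : Type*} [Group G] (K : Subgroup G) : Subgroup G :=
  sInf {M : Subgroup G | M ≤ K ∧ (M.subgroupOf K).Normal ∧ ¬ p ∣ (M.subgroupOf K).index}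

section aux

variable {G : Type*} [Group G] [Finite G] {p : ℕ} [Fact p.Prime]

/-- The defining set of `relResidual`. -/
def resSet (p : ℕ) {G : Type*} [Group G] (K : Subgroup G) : Set (Subgroup G) :=
  {M : Subgroup G | M ≤ K ∧ (M.subgroupOf K).Normal ∧ ¬ p ∣ (M.subgroupOf K).index}

lemma relResidual_eq (K : Subgroup G) : relResidual p K = sInf (resSet p K) := rfl

lemma index_eq_relindex (M K : Subgroup G) : (M.subgroupOf K).index = M.relIndex K := rfl

/-- Inside a finite group, the intersection of two normal p'-index subgroups has p'-index. -/
lemma inf_index_not_dvd {Γ : Type*} [Group Γ] [Finite Γ] {A B : Subgroup Γ}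
    [hB : B.Normal] (hA : ¬ p ∣ A.index) (hBi : ¬ p ∣ B.index) : ¬ p ∣ (A ⊓ B).index := by
  have h1 : (A ⊓ B).relIndex A * A.index = (A ⊓ B).index :=
    Subgroup.relIndex_mul_index inf_le_left
  have h2 : (A ⊓ B).relIndex A = B.relIndex A := by
    rw [inf_comm, Subgroup.inf_relIndex_right]
  have h3 : B.relIndex A ∣ B.index := Subgroup.relIndex_dvd_index_of_normal B A
  intro hdvd
  rw [← h1] at hdvd
  rcases (Fact.out : p.Prime).dvd_mul.mp hdvd with h | h
  · rw [h2] at h; exact hBi (h.trans h3)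
  · exact hA h

lemma mem_resSet_self (K : Subgroup G) : K ∈ resSet p K := by
  refine ⟨le_rfl, ?_, ?_⟩
  · rw [Subgroup.subgroupOf_self]; infer_instance
  · rw [Subgroup.subgroupOf_self, Subgroup.index_top]
    exact fun h => (Fact.out : p.Prime).ne_one (Nat.dvd_one.mp h)

lemma inf_mem_resSet {K M N : Subgroup G} (hM : M ∈ resSet p K) (hN : N ∈ resSet p K) :
    M ⊓ N ∈ resSet p K := by
  obtain ⟨hM1, hM2, hM3⟩ := hM
  obtain ⟨hN1, hN2, hN3⟩ := hN
  have hsub : (M ⊓ N).subgroupOf K = M.subgroupOf K ⊓ N.subgroupOf K :=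
    Subgroup.comap_inf _ _ _
  refine ⟨le_trans inf_le_left hM1, ?_, ?_⟩
  · rw [hsub]
    haveI := hM2; haveI := hN2
    infer_instance
  · rw [hsub]
    haveI := hN2
    exact inf_index_not_dvd hM3 hN3

lemma relResidual_mem_resSet (K : Subgroup G) : relResidual p K ∈ resSet p K := by
  have hfin : (resSet p K).Finite := Set.toFinite _
  obtain ⟨M₀, hM₀, hmin⟩ := Set.Finite.exists_minimalFor id (resSet p K) hfin
    ⟨K, mem_resSet_self K⟩
  have hle : ∀ N ∈ resSet p K, M₀ ≤ N := by
    intro N hN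
    have h1 : M₀ ⊓ N ∈ resSet p K := inf_mem_resSet hM₀ hN
    have h2 : M₀ = M₀ ⊓ N := le_antisymm (hmin h1 inf_le_left) inf_le_left
    rw [h2]; exact inf_le_right
  have heq : relResidual p K = M₀ := le_antisymm (sInf_le hM₀) (le_sInf hle)
  rw [heq]; exact hM₀

/-- Conjugation by an element of `K` preserves `resSet p H` when `H ⊴ K`. -/
lemma conj_mem_resSet {H K : Subgroup G} (hHK : H ≤ K)
    (hN : (H.subgroupOf K).Normal) {k : G} (hk : k ∈ K) {M : Subgroup G}
    (hM : M ∈ resSet p H) : M.comap (MulAut.conj k).toMonoidHom ∈ resSet p H := by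
  obtain ⟨hM1, hM2, hM3⟩ := hM
  have hHnorm : ∀ h k', h ∈ H → k' ∈ K → k' * h * k'⁻¹ ∈ H :=
    (Subgroup.normal_subgroupOf_iff hHK).mp hN
  have hmem : ∀ g : G, g ∈ M.comap (MulAut.conj k).toMonoidHom ↔ k * g * k⁻¹ ∈ M := by
    intro g
    simp [Subgroup.mem_comap, MulAut.conj, mul_assoc]
  have hle : M.comap (MulAut.conj k).toMonoidHom ≤ H := by
    intro g hg
    rw [hmem] at hg
    have : k⁻¹ * (k * g * k⁻¹) * k⁻¹⁻¹ ∈ H := hHnorm _ _ (hM1 hg) (inv_mem hk)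
    simpa [mul_assoc] using this
  have hmapH : H.map (MulAut.conj k).toMonoidHom = H := by
    apply le_antisymm
    · rintro x ⟨h, hh, rfl⟩
      exact hHnorm _ _ hh hk
    · intro h hh
      refine ⟨k⁻¹ * h * k, ?_, ?_⟩
      · have := hHnorm _ _ hh (inv_mem hk); simpa [mul_assoc] using this
      · show k * (k⁻¹ * h * k) * k⁻¹ = h
        group
  refine ⟨hle, ?_, ?_⟩
  · rw [Subgroup.normal_subgroupOf_iff hle]
    intro x h hx hh
    rw [hmem] at hx ⊢
    have key : (k * h * k⁻¹) * (k * x * k⁻¹) * (k * h * k⁻¹)⁻¹ ∈ M :=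
      ((Subgroup.normal_subgroupOf_iff hM1).mp hM2) _ _ hx (hHnorm _ _ hh hk)
    have heq : (k * h * k⁻¹) * (k * x * k⁻¹) * (k * h * k⁻¹)⁻¹ = k * (h * x * h⁻¹) * k⁻¹ := by
      group
    rwa [heq] at key
  · rw [index_eq_relindex] at hM3 ⊢
    rw [show ((M.comap (MulAut.conj k).toMonoidHom).relIndex H)
        = M.relIndex (H.map (MulAut.conj k).toMonoidHom) from
      Subgroup.relIndex_comap M (MulAut.conj k).toMonoidHom H, hmapH]
    exact hM3

/-- The key step: if `S ≤ H ⊴ K` with `S` a Sylow `p`-subgroup of `G`, then the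
relative residuals of `H` and `K` agree. -/
lemma relResidual_step {H K : Subgroup G} (S : Sylow p G) (hS : (S : Subgroup G) ≤ H)
    (hHK : H ≤ K) (hN : (H.subgroupOf K).Normal) :
    relResidual p K = relResidual p H := by
  have hSK : (S : Subgroup G) ≤ K := hS.trans hHK
  have hHKidx : ¬ p ∣ H.relIndex K := by
    intro hdvd
    have h1 : H.relIndex K ∣ (S : Subgroup G).relIndex K :=
      Subgroup.relIndex_dvd_of_le_left K hS
    have h2 : (S : Subgroup G).relIndex K ∣ (S : Subgroup G).index :=
      Subgroup.relIndex_dvd_index_of_le hSK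
    exact S.not_dvd_index ((hdvd.trans h1).trans h2)
  obtain ⟨hRK1, hRK2, hRK3⟩ := relResidual_mem_resSet (p := p) K
  obtain ⟨hRH1, hRH2, hRH3⟩ := relResidual_mem_resSet (p := p) H
  have hHmem : H ∈ resSet p K := ⟨hHK, hN, by rw [index_eq_relindex]; exact hHKidx⟩
  have hRKH : relResidual p K ≤ H := sInf_le hHmem
  apply le_antisymm
  · -- relResidual p K ≤ relResidual p H: show relResidual p H ∈ resSet p K
    have hRHK : relResidual p H ≤ K := hRH1.trans hHK
    have hmemK : relResidual p H ∈ resSet p K := by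
      refine ⟨hRHK, ?_, ?_⟩
      · rw [Subgroup.normal_subgroupOf_iff hRHK]
        intro x k hx hk
        rw [relResidual_eq, Subgroup.mem_sInf]
        intro M hM
        have hcM := conj_mem_resSet (p := p) hHK hN hk hM
        have hxc : x ∈ M.comap (MulAut.conj k).toMonoidHom := sInf_le hcM hx
        simpa [Subgroup.mem_comap, MulAut.conj, mul_assoc] using hxc
      · rw [index_eq_relindex] at hRH3 ⊢
        rw [← Subgroup.relIndex_mul_relIndex (relResidual p H) H K hRH1 hHK]
        intro hdvd
        rcases (Fact.out : p.Prime).dvd_mul.mp hdvd with h | h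
        · exact hRH3 h
        · exact hHKidx h
    exact sInf_le hmemK
  · -- relResidual p H ≤ relResidual p K : show relResidual p K ∈ resSet p H
    have hmem : relResidual p K ∈ resSet p H := by
      refine ⟨hRKH, ?_, ?_⟩
      · rw [Subgroup.normal_subgroupOf_iff hRKH]
        intro x h hx hh
        exact ((Subgroup.normal_subgroupOf_iff hRK1).mp hRK2) _ _ hx (hHK hh)
      · rw [index_eq_relindex] at hRK3 ⊢
        intro hdvd
        apply hRK3
        rw [← Subgroup.relIndex_mul_relIndex (relResidual p K) H K hRKH hHK]
        exact hdvd.mul_right _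
    exact sInf_le hmem

end aux

theorem stmt17 {G : Type*} [Group G] [Finite G] (p : ℕ) [Fact p.Prime]
    (S : Sylow p G) {n : ℕ} (c : Fin (n + 1) → Subgroup G) (H : Subgroup G)
    (h0 : c 0 = H) (hlast : c (Fin.last n) = ⊤)
    (hmono : ∀ i : Fin n, c i.castSucc ≤ c i.succ)
    (hnorm : ∀ i : Fin n, ((c i.castSucc).subgroupOf (c i.succ)).Normal)
    (hS : (S : Subgroup G) ≤ H) :
    ∀ i, relResidual p (c i) = relResidual p H := by
  have key : ∀ i : Fin (n + 1), H ≤ c i ∧ relResidual p (c i) = relResidual p H := by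
    intro i
    induction i using Fin.induction with
    | zero => exact ⟨h0.ge, by rw [h0]⟩
    | succ i ih =>
      obtain ⟨ih1, ih2⟩ := ih
      have hSi : (S : Subgroup G) ≤ c i.castSucc := hS.trans ih1
      have hstep := relResidual_step (p := p) S hSi (hmono i) (hnorm i)
      exact ⟨ih1.trans (hmono i), hstep.trans ih2⟩
  exact fun i => (key i).2
end
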